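/- arXiv:1003.2040 — 3 statements merged into one kernel-verified Lean document; each statement's English description precedes it below -/
import Mathlib

section
/- Let A : ℝ → Matrix (Fin n) (Fin n) ℝ be continuous with A(s + ω) = A(s), and define M(s) = ∑_{k≥1} ξ^{(k)}A(s) (the Peano–Baker series minus the identity). Then the system φ' = Aφ has a nonzero solution that is periodic of period ω if and only if det(M(ω)) = 0. -/
open Matrix

/-- Iterated Peano–Baker integrals. -/
noncomputable def xi {n : ℕ} (A : ℝ → Matrix (Fin n) (Fin n) ℝ) :
    ℕ → ℝ → Matrix (Fin n) (Fin n) ℝ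
  | 0, _ => 1
  | k + 1, s => Matrix.of fun i j => ∫ σ in (0:ℝ)..s, (A σ * xi A k σ) i j

/-!
On `[-R, R]` with `‖A‖ ≤ C` the terms satisfy `‖ξ⁽ᵏ⁾A(s)‖ ≤ (C|s|)ᵏ/k!`, so the series
`Φ(s) = ∑ₖ ξ⁽ᵏ⁾A(s) = I + M(s)` and its termwise derivative `A(s) ξ⁽ᵏ⁻¹⁾A(s)` converge locally
uniformly: `Φ' = AΦ` and `Φ(0) = I`. Uniqueness for the locally Lipschitz system `φ' = Aφ` gives
`φ(s) = Φ(s) φ(0)` for every solution, and, `s ↦ φ(s + ω)` being again a solution, `φ` is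
`ω`-periodic iff `Φ(ω) φ(0) = φ(0)`, i.e. `M(ω) φ(0) = 0`. Such a nonzero `φ(0)` exists iff
`det M(ω) = 0`.
-/

-- Submultiplicative, and compatible with the sup norm on vectors: `‖M *ᵥ v‖ ≤ ‖M‖ * ‖v‖`.
attribute [local instance] Matrix.linftyOpNormedAddCommGroup Matrix.linftyOpNormedSpace
  Matrix.linftyOpNormedRing Matrix.linftyOpNormedAlgebra

open MeasureTheory Set
open scoped Interval

theorem Matrix.intervalIntegral_apply {m p : Type*} [Fintype m] [Fintype p]
    {f : ℝ → Matrix m p ℝ} (hf : Continuous f) (a b : ℝ) (i : m) (j : p) :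
    (∫ σ in a..b, f σ) i j = ∫ σ in a..b, f σ i j :=
  ((entryLinearMap ℝ ℝ i j).toContinuousLinearMap.intervalIntegral_comp_comm
    (hf.intervalIntegrable a b)).symm

theorem Matrix.linfty_opNorm_one_le {m α : Type*} [Fintype m] [DecidableEq m] [NormedRing α]
    [NormOneClass α] : ‖(1 : Matrix m m α)‖ ≤ 1 := by
  rw [← diagonal_one, linfty_opNorm_diagonal]
  exact pi_norm_le_iff_of_nonneg zero_le_one |>.2 fun _ => by simp

section PeanoBaker

variable {n : ℕ} {A : ℝ → Matrix (Fin n) (Fin n) ℝ}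

theorem xi_succ_eq_integral (hA : Continuous A) {k : ℕ} (hk : Continuous (xi A k)) :
    xi A (k + 1) = fun s => ∫ σ in (0:ℝ)..s, A σ * xi A k σ := by
  ext s i j
  exact (intervalIntegral_apply (f := fun σ => A σ * xi A k σ) (hA.mul hk) 0 s i j).symm

theorem continuous_xi (hA : Continuous A) : ∀ k, Continuous (xi A k)
  | 0 => continuous_const
  | k + 1 => by
    rw [xi_succ_eq_integral hA (continuous_xi hA k)]
    exact intervalIntegral.continuous_primitive
      (fun _ _ => (hA.mul (continuous_xi hA k)).intervalIntegrable _ _) 0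

theorem hasDerivAt_xi_succ (hA : Continuous A) (k : ℕ) (s : ℝ) :
    HasDerivAt (xi A (k + 1)) (A s * xi A k s) s := by
  rw [xi_succ_eq_integral hA (continuous_xi hA k)]
  exact ((hA.mul (continuous_xi hA k)).integral_hasStrictDerivAt 0 s).hasDerivAt

theorem xi_succ_zero_right (k : ℕ) : xi A (k + 1) 0 = 0 := by
  ext i j
  simp [xi]

theorem norm_xi_le (hA : Continuous A) {R C : ℝ} (hC : ∀ σ ∈ Icc (-R) R, ‖A σ‖ ≤ C) (k : ℕ)
    {s : ℝ} (hs : |s| ≤ R) : ‖xi A k s‖ ≤ (C * |s|) ^ k / k.factorial := by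
  have hR : 0 ≤ R := (abs_nonneg s).trans hs
  have hC0 : 0 ≤ C := (norm_nonneg _).trans (hC 0 ⟨neg_nonpos.2 hR, hR⟩)
  induction k generalizing s with
  | zero => simpa [xi] using Matrix.linfty_opNorm_one_le
  | succ k ih =>
    have hbound : ∀ σ ∈ Ι (0:ℝ) s, ‖A σ * xi A k σ‖ ≤ C ^ (k + 1) / k.factorial * |σ| ^ k := by
      intro σ hσ
      have hσs : |σ| ≤ |s| := by simpa using abs_sub_left_of_mem_uIcc (uIoc_subset_uIcc hσ)
      calc ‖A σ * xi A k σ‖ ≤ ‖A σ‖ * ‖xi A k σ‖ := norm_mul_le _ _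
        _ ≤ C * ((C * |σ|) ^ k / k.factorial) :=
          mul_le_mul (hC σ (abs_le.1 (hσs.trans hs))) (ih (hσs.trans hs)) (norm_nonneg _) hC0
        _ = C ^ (k + 1) / k.factorial * |σ| ^ k := by ring
    calc ‖xi A (k + 1) s‖
        ≤ ∫ σ in Ι 0 s, ‖A σ * xi A k σ‖ := by
          rw [xi_succ_eq_integral hA (continuous_xi hA k)]
          exact intervalIntegral.norm_integral_le_integral_norm_uIoc
      _ ≤ ∫ σ in Ι 0 s, C ^ (k + 1) / k.factorial * |σ| ^ k :=
          setIntegral_mono_on (((hA.mul (continuous_xi hA k)).norm.intervalIntegrable 0 s).def')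
            ((continuous_const.mul (continuous_abs.pow k)).integrableOn_uIoc)
            measurableSet_uIoc hbound
      _ = (C * |s|) ^ (k + 1) / (k + 1).factorial := by
          have hpow : ∫ σ in Ι 0 s, |σ| ^ k = |s| ^ (k + 1) / (k + 1) := by
            simpa using integral_pow_abs_sub_uIoc (a := 0) (b := s) (n := k)
          rw [integral_const_mul, hpow, Nat.factorial_succ]
          push_cast
          field_simp
          ring

theorem summable_xi (hA : Continuous A) (s : ℝ) : Summable fun k => xi A k s := by
  obtain ⟨C, hC⟩ := (isCompact_Icc (a := -|s|) (b := |s|)).exists_bound_of_continuousOn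
    hA.continuousOn
  refine .of_norm_bounded (Real.summable_pow_div_factorial (C * |s|)) fun k => ?_
  exact norm_xi_le hA hC k le_rfl

noncomputable def peanoBaker (A : ℝ → Matrix (Fin n) (Fin n) ℝ) (s : ℝ) :
    Matrix (Fin n) (Fin n) ℝ :=
  ∑' k, xi A k s

theorem peanoBaker_eq_one_add (hA : Continuous A) (s : ℝ) :
    peanoBaker A s = 1 + ∑' k, xi A (k + 1) s :=
  (summable_xi hA s).tsum_eq_zero_add

theorem peanoBaker_zero : peanoBaker A 0 = 1 := by
  rw [peanoBaker, tsum_eq_single 0 fun k hk => ?_]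
  · rfl
  · obtain ⟨k, rfl⟩ := Nat.exists_eq_succ_of_ne_zero hk
    exact xi_succ_zero_right k

theorem hasDerivAt_peanoBaker (hA : Continuous A) (s : ℝ) :
    HasDerivAt (peanoBaker A) (A s * peanoBaker A s) s := by
  set R := |s| + 1
  have hR0 : 0 < R := by positivity
  obtain ⟨C, hC⟩ := (isCompact_Icc (a := -R) (b := R)).exists_bound_of_continuousOn
    hA.continuousOn
  have hC0 : 0 ≤ C := (norm_nonneg _).trans (hC 0 ⟨by linarith, hR0.le⟩)
  have hs : s ∈ Ioo (-R) R := by constructor <;> linarith [neg_abs_le s, le_abs_self s]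
  have hbound : ∀ k, ∀ y ∈ Ioo (-R) R,
      ‖A y * xi A k y‖ ≤ C * ((C * R) ^ k / k.factorial) := by
    intro k y hy
    have hyR : |y| ≤ R := abs_le.2 ⟨hy.1.le, hy.2.le⟩
    calc ‖A y * xi A k y‖ ≤ ‖A y‖ * ‖xi A k y‖ := norm_mul_le _ _
      _ ≤ C * ((C * |y|) ^ k / k.factorial) :=
        mul_le_mul (hC y (abs_le.1 hyR)) (norm_xi_le hA hC k hyR) (norm_nonneg _) hC0
      _ ≤ C * ((C * R) ^ k / k.factorial) := by gcongr
  have hsum := hasDerivAt_tsum_of_isPreconnected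
    ((Real.summable_pow_div_factorial (C * R)).mul_left C) isOpen_Ioo isPreconnected_Ioo
    (fun k y _ => hasDerivAt_xi_succ hA k y) hbound hs
    ((summable_nat_add_iff 1).2 (summable_xi hA s)) hs
  have hmul : A s * peanoBaker A s = ∑' k, A s * xi A k s :=
    ((summable_xi hA s).tsum_mul_left (A s)).symm
  rw [hmul, funext (peanoBaker_eq_one_add hA)]
  exact hsum.const_add 1

theorem hasDerivAt_peanoBaker_mulVec (hA : Continuous A) (v : Fin n → ℝ) (s : ℝ) :
    HasDerivAt (fun s => peanoBaker A s *ᵥ v) (A s *ᵥ (peanoBaker A s *ᵥ v)) s := by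
  let L : Matrix (Fin n) (Fin n) ℝ →L[ℝ] Fin n → ℝ :=
    ((mulVecBilin ℝ ℝ).flip v).toContinuousLinearMap
  rw [mulVec_mulVec]
  exact L.hasFDerivAt.comp_hasDerivAt s (hasDerivAt_peanoBaker hA s)

theorem eq_of_hasDerivAt_mulVec (hA : Continuous A) {f g : ℝ → Fin n → ℝ} {t₀ : ℝ}
    (hf : ∀ t, HasDerivAt f (A t *ᵥ f t) t) (hg : ∀ t, HasDerivAt g (A t *ᵥ g t) t)
    (h : f t₀ = g t₀) : f = g := by
  funext t
  set R := |t| + |t₀| + 1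
  obtain ⟨C, hC⟩ := (isCompact_Icc (a := -R) (b := R)).exists_bound_of_continuousOn
    hA.continuousOn
  have hlip : ∀ σ ∈ Ioo (-R) R, LipschitzOnWith C.toNNReal (A σ *ᵥ ·) univ := by
    intro σ hσ
    refine (LipschitzWith.of_dist_le_mul fun x y => ?_).lipschitzOnWith
    rw [dist_eq_norm, dist_eq_norm, ← mulVec_sub]
    exact (linfty_opNorm_mulVec _ _).trans (mul_le_mul_of_nonneg_right
      ((hC σ (Ioo_subset_Icc_self hσ)).trans (Real.le_coe_toNNReal C)) (norm_nonneg _))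
  have ht₀ : t₀ ∈ Ioo (-R) R := by
    constructor <;> linarith [abs_nonneg t, neg_abs_le t₀, le_abs_self t₀]
  have ht : t ∈ Ioo (-R) R := by
    constructor <;> linarith [abs_nonneg t₀, neg_abs_le t, le_abs_self t]
  exact ODE_solution_unique_of_mem_Ioo hlip ht₀ (fun s _ => ⟨hf s, mem_univ _⟩)
    (fun s _ => ⟨hg s, mem_univ _⟩) h ht

theorem eq_peanoBaker_mulVec (hA : Continuous A) {φ : ℝ → Fin n → ℝ}
    (hφ : ∀ s, HasDerivAt φ (A s *ᵥ φ s) s) : φ = fun s => peanoBaker A s *ᵥ φ 0 :=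
  eq_of_hasDerivAt_mulVec hA hφ (hasDerivAt_peanoBaker_mulVec hA _) (t₀ := 0)
    (by simp [peanoBaker_zero])

theorem periodic_iff_peanoBaker_mulVec_eq (hA : Continuous A) {ω : ℝ}
    (hAper : Function.Periodic A ω) {φ : ℝ → Fin n → ℝ}
    (hφ : ∀ s, HasDerivAt φ (A s *ᵥ φ s) s) :
    Function.Periodic φ ω ↔ peanoBaker A ω *ᵥ φ 0 = φ 0 := by
  have hφω : φ ω = peanoBaker A ω *ᵥ φ 0 := congrFun (eq_peanoBaker_mulVec hA hφ) ω
  refine ⟨fun h => by simpa [hφω] using h 0, fun h => congrFun ?_⟩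
  refine eq_of_hasDerivAt_mulVec hA (fun s => ?_) hφ (t₀ := 0) (by simpa [hφω] using h)
  simpa [hAper s] using (hφ (s + ω)).comp_add_const s ω

theorem exists_ne_zero_periodic_solution_iff (hA : Continuous A) {ω : ℝ}
    (hAper : Function.Periodic A ω) :
    (∃ φ : ℝ → Fin n → ℝ, (∀ s, HasDerivAt φ (A s *ᵥ φ s) s) ∧ φ ≠ 0 ∧
        Function.Periodic φ ω) ↔ ∃ v ≠ 0, peanoBaker A ω *ᵥ v = v := by
  constructor
  · rintro ⟨φ, hφ, hne, hper⟩
    refine ⟨φ 0, fun h0 => hne ?_, (periodic_iff_peanoBaker_mulVec_eq hA hAper hφ).1 hper⟩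
    rw [eq_peanoBaker_mulVec hA hφ, h0]
    funext s
    simp
  · rintro ⟨v, hv, hfix⟩
    have hsol := hasDerivAt_peanoBaker_mulVec hA v
    refine ⟨fun s => peanoBaker A s *ᵥ v, hsol, fun h => hv ?_, ?_⟩
    · simpa [peanoBaker_zero] using congrFun h 0
    · exact (periodic_iff_peanoBaker_mulVec_eq hA hAper hsol).2 (by simpa [peanoBaker_zero])

end PeanoBaker

theorem stmt_2_general {n : ℕ} (ω : ℝ)
    (A : ℝ → Matrix (Fin n) (Fin n) ℝ)
    (hAcont : Continuous fun s => A s)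
    (hAper : ∀ s, A (s + ω) = A s) :
    (∃ φ : ℝ → Fin n → ℝ, (∀ s, HasDerivAt φ (A s *ᵥ φ s) s) ∧ φ ≠ 0 ∧
        ∀ s, φ (s + ω) = φ s) ↔
      (∑' k : ℕ, xi A (k + 1) ω).det = 0 := by
  refine (exists_ne_zero_periodic_solution_iff hAcont hAper).trans ?_
  rw [← exists_mulVec_eq_zero_iff]
  simp only [peanoBaker_eq_one_add hAcont, add_mulVec, one_mulVec, add_eq_left]

/-- The system `φ' = Aφ`, with `A` continuous and ω-periodic, has a nonzero ω-periodic solution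
iff `det M(ω) = 0`, where `M(s) = ∑_{k≥1} ξ⁽ᵏ⁾A(s)`. -/
theorem stmt_2 {n : ℕ} (ω : ℝ) (hω : 0 < ω)
    (A : ℝ → Matrix (Fin n) (Fin n) ℝ)
    (hAcont : Continuous fun s => A s)
    (hAper : ∀ s, A (s + ω) = A s) :
    (∃ φ : ℝ → Fin n → ℝ, (∀ s, HasDerivAt φ (A s *ᵥ φ s) s) ∧ φ ≠ 0 ∧
        ∀ s, φ (s + ω) = φ s) ↔
      (∑' k : ℕ, xi A (k + 1) ω).det = 0 :=
  stmt_2_general ω A hAcont hAper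
end

section
/- Let ε = ±1, k_g, k_n, τ_g real constants not all zero, A = ![![0, k_g, -ε k_n], ![k_g, 0, ε τ_g], ![k_n, τ_g, 0]], and ω > 0. If exp(ωA) = I and the first row of ∫₀^ω (exp(sA) − I) ds equals (−ω, 0, 0), then τ_g = 0 and there exists a nonzero integer k with ε k_n² − k_g² = (2kπ/ω)². -/
/-!
The matrix `A` satisfies `A³ = λ A` with `λ = k_g² − ε k_n² + ε τ_g²`, so
`exp (s A) = 1 + f(s) A + g(s) A²` where `f' = 1 + λ g`, `g' = f`, `f(0) = g(0) = 0`, and along such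
a pair `f² − λ g² = 2 g`. Multiplying `f(ω) A + g(ω) A² = 0` by `f(ω) − g(ω) A` therefore gives
`2 g(ω) A = 0`, so `f(ω) = g(ω) = 0` as soon as `A ≠ 0`, which the integral condition forces.
For `λ ≥ 0` the explicit `g(ω)` (`ω²/2` or `(cosh θω − 1)/θ²`) is nonzero; hence `λ = −θ² < 0`,
`g(s) = (1 − cos θs)/θ²` and `g(ω) = 0` means `θω ∈ 2πℤ`. Finally
`∫₀^ω (exp (sA) − 1) ds = −(ω/λ) A²`, whose `(0,0)` entry is `−ω` only if `(A²)₀₀ = k_g² − ε k_n²`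
equals `λ`, i.e. `ε τ_g² = 0`.
-/

attribute [local instance] Matrix.linftyOpNormedRing Matrix.linftyOpNormedAlgebra

open NormedSpace

section ExpUniqueness

variable {𝔸 : Type*} [NormedRing 𝔸] [NormedAlgebra ℝ 𝔸] [CompleteSpace 𝔸]

-- `t ↦ exp ((s - t) • a) * E t` has derivative zero; compare its values at `0` and `s`.
theorem eq_exp_smul_of_hasDerivAt {a : 𝔸} {E : ℝ → 𝔸} (hE0 : E 0 = 1)
    (hE : ∀ t, HasDerivAt E (a * E t) t) (s : ℝ) : E s = exp (s • a) := by
  have hexp : ∀ t : ℝ,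
      HasDerivAt (fun t : ℝ => exp ((s - t) • a)) (-(a * exp ((s - t) • a))) t := by
    intro t
    simpa [Function.comp_def] using
      (hasDerivAt_exp_smul_const' (𝕂 := ℝ) a (s - t)).scomp t ((hasDerivAt_id' t).const_sub s)
  have hconst : ∀ t : ℝ, HasDerivAt (fun t => exp ((s - t) • a) * E t) 0 t := by
    intro t
    have hcomm : Commute a (exp ((s - t) • a)) := ((Commute.refl a).smul_right _).exp_right
    refine ((hexp t).mul (hE t)).congr_deriv ?_
    rw [← mul_assoc, ← hcomm.eq, neg_mul, neg_add_cancel]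
  have := is_const_of_deriv_eq_zero (fun t => (hconst t).differentiableAt)
    (fun t => (hconst t).deriv) s 0
  simpa [hE0] using this

end ExpUniqueness

structure IsCubicExpCoeffs (c : ℝ) (f g : ℝ → ℝ) : Prop where
  f_zero : f 0 = 0
  g_zero : g 0 = 0
  hasDerivAt_f : ∀ s, HasDerivAt f (1 + c * g s) s
  hasDerivAt_g : ∀ s, HasDerivAt g (f s) s

namespace IsCubicExpCoeffs

variable {c : ℝ} {f g : ℝ → ℝ}

theorem sq_sub_mul_sq (h : IsCubicExpCoeffs c f g) (s : ℝ) :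
    f s ^ 2 - c * g s ^ 2 = 2 * g s := by
  have hderiv : ∀ t, HasDerivAt (fun t => f t ^ 2 - c * g t ^ 2 - 2 * g t) 0 t := by
    intro t
    refine ((((h.hasDerivAt_f t).pow 2).sub (((h.hasDerivAt_g t).pow 2).const_mul c)).sub
      ((h.hasDerivAt_g t).const_mul 2)).congr_deriv ?_
    push_cast
    ring
  have := is_const_of_deriv_eq_zero (fun t => (hderiv t).differentiableAt)
    (fun t => (hderiv t).deriv) s 0
  simp only [h.f_zero, h.g_zero] at this
  linarith

variable {𝔸 : Type*} [NormedRing 𝔸] [NormedAlgebra ℝ 𝔸] [CompleteSpace 𝔸] {a : 𝔸}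

theorem exp_smul_eq (h : IsCubicExpCoeffs c f g) (ha : a * a * a = c • a) (s : ℝ) :
    exp (s • a) = 1 + f s • a + g s • (a * a) := by
  refine Eq.symm <| eq_exp_smul_of_hasDerivAt (E := fun t => 1 + f t • a + g t • (a * a))
    (by simp [h.f_zero, h.g_zero]) (fun t => ?_) s
  refine (((hasDerivAt_const t (1 : 𝔸)).add ((h.hasDerivAt_f t).smul_const a)).add
    ((h.hasDerivAt_g t).smul_const (a * a))).congr_deriv ?_
  rw [mul_add, mul_add, mul_smul_comm, mul_smul_comm, ← mul_assoc a a a, ha, mul_one, smul_smul]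
  module

theorem eq_zero_of_exp_smul_eq_one (h : IsCubicExpCoeffs c f g) (ha : a * a * a = c • a)
    (ha0 : a ≠ 0) {ω : ℝ} (hω : exp (ω • a) = 1) : f ω = 0 ∧ g ω = 0 := by
  have hlin : f ω • a + g ω • (a * a) = 0 := by
    have := h.exp_smul_eq ha ω
    rwa [hω, add_assoc, left_eq_add] at this
  have hg : (2 * g ω) • a = 0 := by
    rw [← h.sq_sub_mul_sq ω]
    calc (f ω ^ 2 - c * g ω ^ 2) • a = (f ω • 1 - g ω • a) * (f ω • a + g ω • (a * a)) := by
          simp only [sub_mul, mul_add, smul_mul_smul, one_mul, ← mul_assoc, ha, smul_smul]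
          module
      _ = 0 := by rw [hlin, mul_zero]
  have hg0 : g ω = 0 := by simpa [ha0] using hg
  refine ⟨?_, hg0⟩
  simpa [hg0, ha0] using hlin

end IsCubicExpCoeffs

theorem isCubicExpCoeffs_zero : IsCubicExpCoeffs 0 (fun s => s) (fun s => s ^ 2 / 2) where
  f_zero := rfl
  g_zero := by simp
  hasDerivAt_f s := by simpa using hasDerivAt_id' s
  hasDerivAt_g s := ((hasDerivAt_pow 2 s).div_const 2).congr_deriv (by ring)

theorem isCubicExpCoeffs_sinh {θ : ℝ} (hθ : θ ≠ 0) :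
    IsCubicExpCoeffs (θ ^ 2) (fun s => Real.sinh (θ * s) / θ)
      (fun s => (Real.cosh (θ * s) - 1) / θ ^ 2) where
  f_zero := by simp
  g_zero := by simp
  hasDerivAt_f s := by
    refine (((hasDerivAt_id' s).const_mul θ).sinh.div_const θ).congr_deriv ?_
    field_simp
    ring
  hasDerivAt_g s := by
    refine ((((hasDerivAt_id' s).const_mul θ).cosh.sub_const 1).div_const (θ ^ 2)).congr_deriv ?_
    field_simp

theorem isCubicExpCoeffs_sin {θ : ℝ} (hθ : θ ≠ 0) :
    IsCubicExpCoeffs (-θ ^ 2) (fun s => Real.sin (θ * s) / θ)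
      (fun s => (1 - Real.cos (θ * s)) / θ ^ 2) where
  f_zero := by simp
  g_zero := by simp
  hasDerivAt_f s := by
    refine (((hasDerivAt_id' s).const_mul θ).sin.div_const θ).congr_deriv ?_
    field_simp
    ring
  hasDerivAt_g s := by
    refine ((((hasDerivAt_id' s).const_mul θ).cos.const_sub 1).div_const (θ ^ 2)).congr_deriv ?_
    field_simp

section Closedness

variable {𝔸 : Type*} [NormedRing 𝔸] [NormedAlgebra ℝ 𝔸] [CompleteSpace 𝔸] {a : 𝔸} {c ω : ℝ}

theorem neg_of_exp_smul_eq_one (ha : a * a * a = c • a) (ha0 : a ≠ 0) (hω : ω ≠ 0)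
    (h : exp (ω • a) = 1) : c < 0 := by
  by_contra! hc
  rcases hc.eq_or_lt with rfl | hc
  · have := (isCubicExpCoeffs_zero.eq_zero_of_exp_smul_eq_one ha ha0 h).2
    simp [hω] at this
  · obtain ⟨θ, hθ, rfl⟩ : ∃ θ, 0 < θ ∧ c = θ ^ 2 :=
      ⟨√c, by positivity, (Real.sq_sqrt hc.le).symm⟩
    have hcosh : 1 < Real.cosh (θ * ω) := Real.one_lt_cosh.2 (mul_ne_zero hθ.ne' hω)
    exact (div_pos (sub_pos.2 hcosh) (by positivity)).ne'
      ((isCubicExpCoeffs_sinh hθ.ne').eq_zero_of_exp_smul_eq_one ha ha0 h).2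

theorem exists_int_mul_two_pi_eq_of_exp_smul_eq_one {θ : ℝ} (hθ : θ ≠ 0)
    (ha : a * a * a = (-θ ^ 2) • a) (ha0 : a ≠ 0) (h : exp (ω • a) = 1) :
    ∃ n : ℤ, n * (2 * Real.pi) = θ * ω := by
  have := ((isCubicExpCoeffs_sin hθ).eq_zero_of_exp_smul_eq_one ha ha0 h).2
  rw [div_eq_zero_iff, sub_eq_zero] at this
  exact (Real.cos_eq_one_iff _).1 (this.resolve_right (pow_ne_zero 2 hθ)).symm

end Closedness

theorem IsCubicExpCoeffs.integral_exp_smul_sub_one_apply {n : Type*} [Fintype n]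
    [DecidableEq n] {c : ℝ} {f g : ℝ → ℝ} (h : IsCubicExpCoeffs c f g) (hc : c ≠ 0)
    {A : Matrix n n ℝ} (hA : A * A * A = c • A) (hA0 : A ≠ 0) {ω : ℝ} (hω : exp (ω • A) = 1)
    (i j : n) :
    ∫ s in (0:ℝ)..ω, (exp (s • A) - 1) i j = -(ω / c) * (A * A) i j := by
  obtain ⟨hfω, hgω⟩ := h.eq_zero_of_exp_smul_eq_one hA hA0 hω
  have hint : ∀ s, (exp (s • A) - 1) i j = f s * A i j + g s * (A * A) i j := by
    intro s
    -- restated so that `exp` carries the matrix topology of the goal rather than the norm's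
    have hexp : exp (s • A) = 1 + f s • A + g s • (A * A) := h.exp_smul_eq hA s
    rw [hexp]
    simp only [Matrix.sub_apply, Matrix.add_apply, Matrix.smul_apply, smul_eq_mul]
    ring
  have hprim : ∀ s, HasDerivAt (fun s => g s * A i j + (f s - s) / c * (A * A) i j)
      (f s * A i j + g s * (A * A) i j) s := by
    intro s
    refine (((h.hasDerivAt_g s).mul_const _).add
      ((((h.hasDerivAt_f s).sub (hasDerivAt_id' s)).div_const c).mul_const _)).congr_deriv ?_
    field_simp
    ring
  have hf : Continuous f :=
    continuous_iff_continuousAt.2 fun s => (h.hasDerivAt_f s).continuousAt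
  have hg : Continuous g :=
    continuous_iff_continuousAt.2 fun s => (h.hasDerivAt_g s).continuousAt
  rw [intervalIntegral.integral_congr fun s _ => hint s,
    intervalIntegral.integral_eq_sub_of_hasDerivAt (fun s _ => hprim s)
      ((by fun_prop : Continuous _).intervalIntegrable 0 ω)]
  simp [hfω, hgω, h.f_zero, h.g_zero]
  ring

def darbouxMatrix (ε kg kn τg : ℝ) : Matrix (Fin 3) (Fin 3) ℝ :=
  !![0, kg, -ε * kn; kg, 0, ε * τg; kn, τg, 0]

theorem darbouxMatrix_mul_mul_self (ε kg kn τg : ℝ) :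
    darbouxMatrix ε kg kn τg * darbouxMatrix ε kg kn τg * darbouxMatrix ε kg kn τg =
      (kg ^ 2 - ε * kn ^ 2 + ε * τg ^ 2) • darbouxMatrix ε kg kn τg := by
  ext i j
  fin_cases i <;> fin_cases j <;>
    simp [darbouxMatrix, Matrix.mul_apply, Fin.sum_univ_three] <;> ring

theorem darbouxMatrix_mul_self_zero_zero (ε kg kn τg : ℝ) :
    (darbouxMatrix ε kg kn τg * darbouxMatrix ε kg kn τg) 0 0 = kg ^ 2 - ε * kn ^ 2 := by
  simp [darbouxMatrix, Matrix.mul_apply, Fin.sum_univ_three]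
  ring

theorem stmt_10_general (kg kn τg ε : ℝ) (hε : ε = 1 ∨ ε = -1)
    (A : Matrix (Fin 3) (Fin 3) ℝ)
    (hA : A = !![0, kg, -ε * kn; kg, 0, ε * τg; kn, τg, 0])
    (ω : ℝ) (hω : 0 < ω)
    (hmono : NormedSpace.exp (ω • A) = 1)
    (h1 : (∫ s in (0:ℝ)..ω, (NormedSpace.exp (s • A) - 1) 0 0) = -ω) :
    τg = 0 ∧ ∃ k : ℤ, k ≠ 0 ∧ ε * kn ^ 2 - kg ^ 2 = (2 * k * Real.pi / ω) ^ 2 := by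
  replace hA : A = darbouxMatrix ε kg kn τg := hA
  have hA0 : A ≠ 0 := by
    rintro rfl
    simp at h1
    linarith
  have hA3 := hA ▸ darbouxMatrix_mul_mul_self ε kg kn τg
  obtain ⟨θ, hθ, hθsq⟩ : ∃ θ, 0 < θ ∧ kg ^ 2 - ε * kn ^ 2 + ε * τg ^ 2 = -θ ^ 2 := by
    have hneg := neg_of_exp_smul_eq_one hA3 hA0 hω.ne' hmono
    exact ⟨√(-(kg ^ 2 - ε * kn ^ 2 + ε * τg ^ 2)), Real.sqrt_pos.2 (by linarith), by
      rw [Real.sq_sqrt (by linarith)]; ring⟩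
  rw [hθsq] at hA3
  have hτ : τg = 0 := by
    have h00 := (isCubicExpCoeffs_sin hθ.ne').integral_exp_smul_sub_one_apply
      (neg_ne_zero.2 (pow_ne_zero 2 hθ.ne')) hA3 hA0 hmono 0 0
    rw [h1, hA, darbouxMatrix_mul_self_zero_zero] at h00
    have hετ : ε * τg ^ 2 = 0 := by
      field_simp at h00
      linarith
    rcases hε with rfl | rfl <;> simpa using hετ
  obtain ⟨k, hk⟩ := exists_int_mul_two_pi_eq_of_exp_smul_eq_one hθ.ne' hA3 hA0 hmono
  refine ⟨hτ, k, ?_, ?_⟩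
  · rintro rfl
    simp only [Int.cast_zero, zero_mul] at hk
    exact (mul_pos hθ hω).ne hk
  · have hθ' : θ = 2 * k * Real.pi / ω := by
      rw [eq_div_iff hω.ne']
      linarith
    rw [← hθ']
    subst hτ
    linarith

/-- Necessity direction of the closedness criterion: if `exp(ωA) = I` and the first row of
`∫₀^ω (exp(sA) − I) ds` is `(−ω, 0, 0)`, then `τ_g = 0` and
`ε k_n² − k_g² = (2kπ/ω)²` for some nonzero integer `k`. -/
theorem stmt_10 (kg kn τg ε : ℝ) (hε : ε = 1 ∨ ε = -1)
    (hnz : ¬(kg = 0 ∧ kn = 0 ∧ τg = 0))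
    (A : Matrix (Fin 3) (Fin 3) ℝ)
    (hA : A = !![0, kg, -ε * kn; kg, 0, ε * τg; kn, τg, 0])
    (ω : ℝ) (hω : 0 < ω)
    (hmono : NormedSpace.exp (ω • A) = 1)
    (h1 : (∫ s in (0:ℝ)..ω, (NormedSpace.exp (s • A) - 1) 0 0) = -ω)
    (h2 : (∫ s in (0:ℝ)..ω, (NormedSpace.exp (s • A) - 1) 0 1) = 0)
    (h3 : (∫ s in (0:ℝ)..ω, (NormedSpace.exp (s • A) - 1) 0 2) = 0) :
    τg = 0 ∧ ∃ k : ℤ, k ≠ 0 ∧ ε * kn ^ 2 - kg ^ 2 = (2 * k * Real.pi / ω) ^ 2 :=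
  stmt_10_general kg kn τg ε hε A hA ω hω hmono h1
end

section
/- Let A = ![![0, k_g, -ε k_n], ![k_g, 0, ε τ_g], ![k_n, τ_g, 0]] with ε = ±1, and suppose μ = k_g² − ε k_n² + ε τ_g² ≥ 0 and A ≠ 0. Then exp(ωA) ≠ I for every ω > 0. -/
/-!
The Darboux matrix satisfies `A ^ 3 = μ • A`. If `μ = 0`, then `ωA` is nilpotent and
`exp (ωA) = 1 + ωA + (ωA)² / 2`, so `exp (ωA) = 1` forces `(ωA)² = 0` and then `ωA = 0`.
If `μ > 0`, put `s = ω √μ`: the identity `ωA ((ωA - s) (ωA + s)) = 0` with `ωA ≠ 0` shows that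
`s` or `-s` lies in the spectrum of `ωA`, so by spectral mapping `exp (±s)` lies in the spectrum
of `exp (ωA) = 1`, i.e. `exp (±s) = 1`, which is impossible for `s ≠ 0`.
-/

open Finset Nat in
theorem NormedSpace.exp_eq_sum_range_of_pow_eq_zero {𝔸 : Type*} [Ring 𝔸] [Algebra ℚ 𝔸]
    [TopologicalSpace 𝔸] [IsTopologicalRing 𝔸] [T2Space 𝔸] {x : 𝔸} {n : ℕ} (h : x ^ n = 0) :
    NormedSpace.exp x = ∑ i ∈ range n, (i !⁻¹ : ℚ) • x ^ i := by
  rw [NormedSpace.exp_eq_tsum ℚ]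
  refine tsum_eq_sum fun i hi => ?_
  rw [pow_eq_zero_of_le (by simpa using hi) h, smul_zero]

theorem NormedSpace.eq_zero_of_exp_eq_one_of_pow_three_eq_zero {𝔸 : Type*} [Ring 𝔸] [Algebra ℚ 𝔸]
    [TopologicalSpace 𝔸] [IsTopologicalRing 𝔸] [T2Space 𝔸] {x : 𝔸} (h : x ^ 3 = 0)
    (he : NormedSpace.exp x = 1) : x = 0 := by
  have hsum : x + (2⁻¹ : ℚ) • x ^ 2 = 0 := by
    rw [NormedSpace.exp_eq_sum_range_of_pow_eq_zero h] at he
    simpa [Finset.sum_range_succ, add_assoc] using he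
  have hsq : x ^ 2 = 0 := by
    have := congrArg (x * ·) hsum
    simp only [mul_add, mul_smul_comm, sq, ← pow_three, h, smul_zero, add_zero, mul_zero] at this
    rwa [sq]
  simpa [hsq] using hsum

theorem spectrum.mem_or_neg_mem_of_pow_three_eq {K A : Type*} [Field K] [Ring A] [Algebra K A]
    {a : A} {s : K} (h : a ^ 3 = s ^ 2 • a) (ha : a ≠ 0) :
    s ∈ spectrum K a ∨ -s ∈ spectrum K a := by
  by_contra! ⟨hpos, hneg⟩
  rw [spectrum.notMem_iff] at hpos hneg
  have hfactor : a * ((algebraMap K A s - a) * (algebraMap K A (-s) - a)) = 0 :=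
    calc a * ((algebraMap K A s - a) * (algebraMap K A (-s) - a)) = a ^ 3 - s ^ 2 • a := by
          simp only [Algebra.algebraMap_eq_smul_one, neg_smul, mul_sub, sub_mul, smul_mul_assoc,
            mul_smul_comm, one_mul, mul_one, mul_neg, pow_three, sq]
          module
      _ = 0 := sub_eq_zero.mpr h
  exact ha ((hpos.mul hneg).mul_left_eq_zero.mp hfactor)

theorem spectrum.eq_zero_of_exp_eq_one {A : Type*} [NormedRing A] [NormedAlgebra ℝ A]
    [CompleteSpace A] {a : A} (he : NormedSpace.exp a = 1) {z : ℝ} (hz : z ∈ spectrum ℝ a) :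
    z = 0 := by
  have h1 := spectrum.exp_mem_exp a hz
  rw [he, ← Real.exp_eq_exp_ℝ, ← map_one (algebraMap ℝ A), spectrum.mem_iff, ← map_sub] at h1
  rw [← Real.exp_eq_one_iff, ← sub_eq_zero]
  by_contra hne
  exact h1 ((Ne.isUnit hne).map _)

theorem Matrix.eq_zero_of_mem_spectrum_of_exp_eq_one {n : Type*} [Fintype n] [DecidableEq n]
    {A : Matrix n n ℝ} (he : NormedSpace.exp A = 1) {z : ℝ} (hz : z ∈ spectrum ℝ A) : z = 0 := by
  -- any matrix norm will do: it induces the product topology, which is all `exp` depends on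
  let := Matrix.linftyOpNormedRing (n := n) (α := ℝ)
  let := Matrix.linftyOpNormedAlgebra (n := n) (R := ℝ) (α := ℝ)
  exact spectrum.eq_zero_of_exp_eq_one he hz

theorem darboux_pow_three (kg kn τg ε : ℝ) :
    !![0, kg, -ε * kn; kg, 0, ε * τg; kn, τg, 0] ^ 3 =
      (kg ^ 2 - ε * kn ^ 2 + ε * τg ^ 2) • !![0, kg, -ε * kn; kg, 0, ε * τg; kn, τg, 0] := by
  ext i j
  fin_cases i <;> fin_cases j <;> simp [pow_three, Matrix.mul_apply, Fin.sum_univ_succ] <;> ring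

theorem stmt_17_general (kg kn τg ε : ℝ)
    (A : Matrix (Fin 3) (Fin 3) ℝ)
    (hA : A = !![0, kg, -ε * kn; kg, 0, ε * τg; kn, τg, 0])
    (hμ : 0 ≤ kg ^ 2 - ε * kn ^ 2 + ε * τg ^ 2)
    (hAne : A ≠ 0) :
    ∀ ω : ℝ, 0 < ω → NormedSpace.exp (ω • A) ≠ 1 := by
  intro ω hω hexp
  set s := ω * √(kg ^ 2 - ε * kn ^ 2 + ε * τg ^ 2)
  have hcube : (ω • A) ^ 3 = s ^ 2 • ω • A := by
    rw [smul_pow, hA, darboux_pow_three, mul_pow, Real.sq_sqrt hμ, smul_smul, smul_smul]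
    ring_nf
  have hωA : ω • A ≠ 0 := smul_ne_zero hω.ne' hAne
  rcases eq_or_ne s 0 with hs | hs
  · rw [hs, zero_pow two_ne_zero, zero_smul] at hcube
    exact hωA (NormedSpace.eq_zero_of_exp_eq_one_of_pow_three_eq_zero hcube hexp)
  · rcases spectrum.mem_or_neg_mem_of_pow_three_eq hcube hωA with h | h
    · exact hs (Matrix.eq_zero_of_mem_spectrum_of_exp_eq_one hexp h)
    · exact hs (neg_eq_zero.mp (Matrix.eq_zero_of_mem_spectrum_of_exp_eq_one hexp h))

/-- If `μ = k_g² − ε k_n² + ε τ_g² ≥ 0` and the Darboux matrix `A` is nonzero, then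
`exp(ωA) ≠ I` for every `ω > 0`; so a closed curve requires `μ < 0`. -/
theorem stmt_17 (kg kn τg ε : ℝ) (hε : ε = 1 ∨ ε = -1)
    (A : Matrix (Fin 3) (Fin 3) ℝ)
    (hA : A = !![0, kg, -ε * kn; kg, 0, ε * τg; kn, τg, 0])
    (hμ : 0 ≤ kg ^ 2 - ε * kn ^ 2 + ε * τg ^ 2)
    (hAne : A ≠ 0) :
    ∀ ω : ℝ, 0 < ω → NormedSpace.exp (ω • A) ≠ 1 :=
  stmt_17_general kg kn τg ε A hA hμ hAne
end
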